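/- Let $v, v' \in \mathbb{R}^3$ and $\theta \in (0,1)$ with $(1-\theta)|v| \geq |v'|$. Then for every $w \in \mathbb{R}^3$ orthogonal to $v - v'$, one has $|v+w|^2 \geq \theta(|v|^2 + |w|^2)$; in particular $|v+w| \geq \sqrt{\theta/2}\,(|v|+|w|)$. -/
import Mathlib


open scoped RealInnerProductSpace

noncomputable def jap (v : EuclideanSpace ℝ (Fin 3)) : ℝ := Real.sqrt (1 + ‖v‖ ^ 2)

theorem stmt0 (v v' w : EuclideanSpace ℝ (Fin 3)) (θ : ℝ) (hθ0 : 0 < θ) (hθ1 : θ < 1)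
    (hvv' : ‖v'‖ ≤ (1 - θ) * ‖v‖) (hw : ⟪w, v - v'⟫ = 0) :
    θ * (‖v‖ ^ 2 + ‖w‖ ^ 2) ≤ ‖v + w‖ ^ 2 ∧
      Real.sqrt (θ / 2) * (‖v‖ + ‖w‖) ≤ ‖v + w‖ := by
  have hwv : ⟪w, v⟫ = ⟪w, v'⟫ := by
    have := hw
    rw [inner_sub_right] at this
    linarith
  have habs : |⟪w, v'⟫| ≤ ‖w‖ * ‖v'‖ := abs_real_inner_le_norm w v'
  have hsq : ‖v + w‖ ^ 2 = ‖v‖ ^ 2 + 2 * ⟪w, v⟫ + ‖w‖ ^ 2 := by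
    rw [norm_add_sq_real, real_inner_comm]
  have hnv : (0:ℝ) ≤ ‖v‖ := norm_nonneg _
  have hnw : (0:ℝ) ≤ ‖w‖ := norm_nonneg _
  have hnv' : (0:ℝ) ≤ ‖v'‖ := norm_nonneg _
  have h1 : θ * (‖v‖ ^ 2 + ‖w‖ ^ 2) ≤ ‖v + w‖ ^ 2 := by
    have h2 : -(‖w‖ * ‖v'‖) ≤ ⟪w, v'⟫ := neg_abs_le _ |>.trans' (by linarith [abs_nonneg ⟪w, v'⟫, neg_abs_le ⟪w, v'⟫])
    have h3 : ⟪w, v'⟫ ≥ -(‖w‖ * ((1 - θ) * ‖v‖)) := by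
      have := neg_abs_le ⟪w, v'⟫
      nlinarith
    nlinarith [sq_nonneg (‖v‖ - ‖w‖)]
  refine ⟨h1, ?_⟩
  have hs : Real.sqrt (θ / 2) * (‖v‖ + ‖w‖) = Real.sqrt (θ / 2 * (‖v‖ + ‖w‖) ^ 2) := by
    rw [Real.sqrt_mul (by positivity), Real.sqrt_sq (by positivity)]
  rw [hs]
  have : ‖v + w‖ = Real.sqrt (‖v + w‖ ^ 2) := (Real.sqrt_sq (norm_nonneg _)).symm
  rw [this]
  apply Real.sqrt_le_sqrt
  nlinarith [sq_nonneg (‖v‖ - ‖w‖)]
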